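/- arXiv:2210.08328 — 7 statements merged into one kernel-verified Lean document; each statement's English description precedes it below -/
import Mathlib

section
/- For every integer n ≥ 1, every integer b ≥ 2, and every γ ∈ (0,1), the strict inequality γ^{−n}(1−γ^n)(1−(1−γ^n)^{b−1}) < b−1 holds; in particular the denominator b−1 − γ^{−n}(1−γ^n)(1−(1−γ^n)^{b−1}) of ψ_t(γ) is strictly positive. -/
/-! With `x = γ ^ n ∈ (0, 1]` and `m = b - 1 ≥ 1`, Bernoulli's inequality gives
`1 - (1 - x) ^ m ≤ m x`, so `(1 - x) (1 - (1 - x) ^ m) ≤ (1 - x) m x < m x`; dividing by `x`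
gives the claim. -/

lemma one_sub_one_sub_pow_le_mul {x : ℝ} (hx : x ≤ 2) (m : ℕ) :
    1 - (1 - x) ^ m ≤ m * x := by
  have := one_add_mul_le_pow (a := -x) (by linarith) m
  rw [← sub_eq_add_neg] at this
  linarith

lemma one_sub_mul_one_sub_one_sub_pow_lt {x : ℝ} (hx₀ : 0 < x) (hx₁ : x ≤ 1) {m : ℕ}
    (hm : 0 < m) : (1 - x) * (1 - (1 - x) ^ m) < m * x := by
  have hmx : 0 < (m : ℝ) * x := by positivity
  calc (1 - x) * (1 - (1 - x) ^ m) ≤ (1 - x) * (m * x) :=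
        mul_le_mul_of_nonneg_left (one_sub_one_sub_pow_le_mul (by linarith) m) (by linarith)
    _ < m * x := by nlinarith

lemma inv_mul_one_sub_mul_one_sub_one_sub_pow_lt {x : ℝ} (hx₀ : 0 < x) (hx₁ : x ≤ 1) {m : ℕ}
    (hm : 0 < m) : x⁻¹ * (1 - x) * (1 - (1 - x) ^ m) < m := by
  rw [mul_assoc, inv_mul_lt_iff₀ hx₀, mul_comm x]
  exact one_sub_mul_one_sub_one_sub_pow_lt hx₀ hx₁ hm

theorem psi_denominator_pos_general
    (n b : ℕ) (hb : 2 ≤ b) (γ : ℝ) (hγ : γ ∈ Set.Ioo (0 : ℝ) 1) :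
    (γ ^ n)⁻¹ * (1 - γ ^ n) * (1 - (1 - γ ^ n) ^ (b - 1)) < (b : ℝ) - 1 := by
  obtain ⟨hγ₀, hγ₁⟩ := hγ
  have key := inv_mul_one_sub_mul_one_sub_one_sub_pow_lt (pow_pos hγ₀ n)
    (pow_le_one₀ hγ₀.le hγ₁.le) (Nat.sub_pos_of_lt hb)
  rwa [Nat.cast_sub (by omega), Nat.cast_one] at key

/-- The denominator of `ψ_t(γ)` is strictly positive: for `n ≥ 1`, `b ≥ 2` and
`γ ∈ (0,1)` one has `γ^{−n}(1−γ^n)(1−(1−γ^n)^{b−1}) < b−1`. -/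
theorem psi_denominator_pos
    (n b : ℕ) (hn : 1 ≤ n) (hb : 2 ≤ b) (γ : ℝ) (hγ : γ ∈ Set.Ioo (0 : ℝ) 1) :
    (γ ^ n)⁻¹ * (1 - γ ^ n) * (1 - (1 - γ ^ n) ^ (b - 1)) < (b : ℝ) - 1 :=
  psi_denominator_pos_general n b hb γ hγ
end

section
/- Fix integers n ≥ 1, b ≥ 2, and t with 2 ≤ t ≤ b, and define ψ_t(γ) = (1−(1−γ^n)^{t−1}) / (b−1 − γ^{−n}(1−γ^n)(1−(1−γ^n)^{b−1})) for γ ∈ (0,1). Then ψ_t(γ) → 2(t−1)/(b(b−1)) as γ → 0⁺. -/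
/-!
Put `x = γ ^ n` and `u = 1 - x`. By the geometric sum, `1 - u ^ p = x · ∑_{k<p} u ^ k` and
`b - 1 - x⁻¹ u (1 - u ^ (b-1)) = ∑_{j<b-1} (1 - u ^ (j+1)) = x · ∑_{j<b-1} ∑_{i≤j} u ^ i`, so after
cancelling `x` the ratio is a quotient of polynomials in `u`. Its value at `u = 1` is
`(t - 1) / (1 + 2 + ⋯ + (b - 1)) = 2 (t - 1) / (b (b - 1))`.
-/

open Filter Set Finset Topology

theorem natCast_sub_mul_geom_sum {R : Type*} [CommRing R] (u : R) (m : ℕ) :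
    (m : R) - u * ∑ k ∈ range m, u ^ k =
      (1 - u) * ∑ j ∈ range m, ∑ i ∈ range (j + 1), u ^ i := by
  induction m with
  | zero => simp
  | succ m ih =>
    rw [sum_range_succ, sum_range_succ]
    push_cast
    linear_combination ih - mul_neg_geom_sum u (m + 1)

theorem sum_range_natCast_add_one {K : Type*} [Field K] [CharZero K] (m : ℕ) :
    ∑ j ∈ range m, ((j : K) + 1) = (m + 1) * m / 2 := by
  induction m with
  | zero => simp
  | succ m ih =>
    rw [sum_range_succ, ih]
    push_cast
    ring

theorem one_sub_pow_div_eq_geom_sum_div {K : Type*} [Field K] (p m : ℕ) {x : K} (hx : x ≠ 0) :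
    (1 - (1 - x) ^ p) / (m - x⁻¹ * (1 - x) * (1 - (1 - x) ^ m)) =
      (∑ k ∈ range p, (1 - x) ^ k) / ∑ j ∈ range m, ∑ i ∈ range (j + 1), (1 - x) ^ i := by
  have hgeom (q : ℕ) : 1 - (1 - x) ^ q = x * ∑ k ∈ range q, (1 - x) ^ k := by
    rw [← mul_neg_geom_sum, sub_sub_cancel]
  have hden : (m : K) - x⁻¹ * (1 - x) * (1 - (1 - x) ^ m) =
      x * ∑ j ∈ range m, ∑ i ∈ range (j + 1), (1 - x) ^ i := by
    have hcancel (S : K) : x⁻¹ * (1 - x) * (x * S) = (1 - x) * S := by field_simp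
    rw [hgeom, hcancel, natCast_sub_mul_geom_sum, sub_sub_cancel]
  rw [hgeom, hden, mul_div_mul_left _ _ hx]

theorem tendsto_one_sub_pow_div_nhdsNE_zero (p : ℕ) {m : ℕ} (hm : m ≠ 0) :
    Tendsto (fun x : ℝ => (1 - (1 - x) ^ p) / (m - x⁻¹ * (1 - x) * (1 - (1 - x) ^ m)))
      (𝓝[≠] 0) (𝓝 (2 * p / ((m + 1) * m))) := by
  set N : ℝ → ℝ := fun x => ∑ k ∈ range p, (1 - x) ^ k
  set D : ℝ → ℝ := fun x => ∑ j ∈ range m, ∑ i ∈ range (j + 1), (1 - x) ^ i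
  have hN : N 0 = p := by simp [N]
  have hD : D 0 = (m + 1) * m / 2 := by simp [D, sum_range_natCast_add_one]
  have hD_ne : D 0 ≠ 0 := by rw [hD]; positivity
  have hND : Tendsto (fun x => N x / D x) (𝓝 0) (𝓝 (N 0 / D 0)) :=
    ((by fun_prop : Continuous N).tendsto 0).div ((by fun_prop : Continuous D).tendsto 0) hD_ne
  rw [hN, hD, div_div_eq_mul_div, mul_comm] at hND
  refine (hND.mono_left nhdsWithin_le_nhds).congr' ?_
  filter_upwards [self_mem_nhdsWithin] with x hx
  exact (one_sub_pow_div_eq_geom_sum_div p m hx).symm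

theorem tendsto_pow_nhdsGT_zero_nhdsNE_zero {n : ℕ} (hn : n ≠ 0) :
    Tendsto (fun γ : ℝ => γ ^ n) (𝓝[>] 0) (𝓝[≠] 0) := by
  refine tendsto_nhdsWithin_of_tendsto_nhds_of_eventually_within _ ?_ ?_
  · simpa [zero_pow hn] using ((continuous_pow n).tendsto (0 : ℝ)).mono_left nhdsWithin_le_nhds
  · filter_upwards [self_mem_nhdsWithin] with γ hγ
    exact (pow_pos hγ n).ne'

theorem psi_limit_at_zero_general
    (n b t : ℕ) (hn : 1 ≤ n) (hb : 2 ≤ b) (ht : 2 ≤ t) :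
    Tendsto (fun γ : ℝ =>
        (1 - (1 - γ ^ n) ^ (t - 1)) /
          ((b : ℝ) - 1 - (γ ^ n)⁻¹ * (1 - γ ^ n) * (1 - (1 - γ ^ n) ^ (b - 1))))
      (nhdsWithin 0 (Ioi 0)) (nhds (2 * ((t : ℝ) - 1) / ((b : ℝ) * ((b : ℝ) - 1)))) := by
  obtain ⟨m, rfl⟩ : ∃ m, b = m + 1 := ⟨b - 1, by omega⟩
  obtain ⟨p, rfl⟩ : ∃ p, t = p + 1 := ⟨t - 1, by omega⟩
  have h := (tendsto_one_sub_pow_div_nhdsNE_zero p (m := m) (by omega)).comp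
    (tendsto_pow_nhdsGT_zero_nhdsNE_zero (n := n) (by omega))
  simpa [Function.comp_def] using h

/-- For `n ≥ 1`, `2 ≤ t ≤ b`, the posterior probability
`ψ_t(γ) = (1−(1−γ^n)^{t−1}) / (b−1 − γ^{−n}(1−γ^n)(1−(1−γ^n)^{b−1}))`
tends to `2(t−1)/(b(b−1))` as `γ → 0⁺`. -/
theorem psi_limit_at_zero
    (n b t : ℕ) (hn : 1 ≤ n) (hb : 2 ≤ b) (ht : 2 ≤ t) (htb : t ≤ b) :
    Tendsto (fun γ : ℝ =>
        (1 - (1 - γ ^ n) ^ (t - 1)) /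
          ((b : ℝ) - 1 - (γ ^ n)⁻¹ * (1 - γ ^ n) * (1 - (1 - γ ^ n) ^ (b - 1))))
      (nhdsWithin 0 (Ioi 0)) (nhds (2 * ((t : ℝ) - 1) / ((b : ℝ) * ((b : ℝ) - 1)))) :=
  psi_limit_at_zero_general n b t hn hb ht
end

section
/- Fix integers n ≥ 1 and b ≥ 3, and define ψ_2(γ) = γ^n / (b−1 − γ^{−n}(1−γ^n)(1−(1−γ^n)^{b−1})) for γ ∈ (0,1). Then ψ_2(γ) < 1/(b−1) for every γ ∈ (0,1). -/
/-! With `x = γ^n` and `m = b − 1`, the denominator exceeds `m x`: their difference is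
`x⁻¹ (1 − x) (m x − (1 − (1 − x)^m))`, which is positive by the strict Bernoulli inequality
`(1 − x)^m > 1 − m x` for `m ≥ 2`. Hence `ψ_2 < x / (m x) = 1 / m`. -/

theorem one_sub_one_sub_pow_lt_mul {x : ℝ} (hx0 : x ≠ 0) (hx1 : x ≤ 1) {m : ℕ} (hm : 2 ≤ m) :
    1 - (1 - x) ^ m < m * x := by
  have h := one_add_mul_self_lt_rpow_one_add (s := -x) (p := m) (by linarith) (neg_ne_zero.2 hx0)
    (by exact_mod_cast hm)
  rw [← sub_eq_add_neg, Real.rpow_natCast] at h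
  linarith

theorem div_sub_inv_mul_one_sub_pow_lt_one_div {x : ℝ} (hx0 : 0 < x) (hx1 : x < 1) {m : ℕ}
    (hm : 2 ≤ m) : x / (m - x⁻¹ * (1 - x) * (1 - (1 - x) ^ m)) < 1 / m := by
  have hgap : (m - x⁻¹ * (1 - x) * (1 - (1 - x) ^ m)) - m * x =
      x⁻¹ * (1 - x) * (m * x - (1 - (1 - x) ^ m)) := by
    field_simp
    ring
  have hbern := one_sub_one_sub_pow_lt_mul hx0.ne' hx1.le hm
  have hmx : m * x < m - x⁻¹ * (1 - x) * (1 - (1 - x) ^ m) := by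
    have : 0 < x⁻¹ * (1 - x) * (m * x - (1 - (1 - x) ^ m)) :=
      mul_pos (mul_pos (inv_pos.2 hx0) (sub_pos.2 hx1)) (sub_pos.2 hbern)
    linarith
  have hm0 : (0 : ℝ) < m := by positivity
  calc _ < x / (m * x) := div_lt_div_of_pos_left hx0 (by positivity) hmx
    _ = 1 / m := by field_simp

/-- The posterior probability of being in group `2` after observing a defection,
`ψ_2(γ) = γ^n / (b−1 − γ^{−n}(1−γ^n)(1−(1−γ^n)^{b−1}))`, is strictly below the uniform
weight `1/(b−1)` for all `γ ∈ (0,1)`. -/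
theorem psi_two_below_uniform
    (n b : ℕ) (hn : 1 ≤ n) (hb : 3 ≤ b) (γ : ℝ) (hγ : γ ∈ Set.Ioo (0 : ℝ) 1) :
    γ ^ n / ((b : ℝ) - 1 - (γ ^ n)⁻¹ * (1 - γ ^ n) * (1 - (1 - γ ^ n) ^ (b - 1)))
      < 1 / ((b : ℝ) - 1) := by
  obtain ⟨hγ0, hγ1⟩ := hγ
  have h := div_sub_inv_mul_one_sub_pow_lt_one_div (pow_pos hγ0 n)
    (pow_lt_one₀ hγ0.le hγ1 (by omega)) (m := b - 1) (by omega)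
  rwa [Nat.cast_pred (by omega)] at h
end

section
/- Fix integers n ≥ 1 and b ≥ 3, and for γ ∈ (0,1) and 2 ≤ t ≤ b define φ_t(γ) = n(1−γ)(1−(1−γ^n)^{b−t})/γ + 1, φ̃_t(γ) = n(1−γ)(1−(1−γ^n)^{b−t})/γ^n + 1, and ψ_t(γ) = (1−(1−γ^n)^{t−1}) / (b−1 − γ^{−n}(1−γ^n)(1−(1−γ^n)^{b−1})). Then for every γ ∈ (0,1): (1/(b−1)) Σ_{t=2}^{b} φ̃_t(γ) ≥ Σ_{t=2}^{b} ψ_t(γ) φ_t(γ). -/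
/-!
Write `x = γ ^ n` and `q = 1 - x`. The denominator of `ψ_t` is exactly `∑_{t=2}^{b} (1 - q^(t-1))`,
so `ψ` is a probability vector whose weights `1 - q^(t-1)` increase with `t`, while the only
`t`-dependent factor `1 - q^(b-t)` of `φ_t` and `φ̃_t` decreases with `t`. By Chebyshev's sum
inequality the `ψ`-average of that factor is at most its uniform average, and the prefactor
`n(1-γ)/γ` of `φ_t` is at most the prefactor `n(1-γ)/γ^n` of `φ̃_t`.
-/

open Finset

theorem sum_Icc_two_one_sub_pow_pred {K : Type*} [Field K] {x : K} (hx : x ≠ 0) {b : ℕ}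
    (hb : 1 ≤ b) :
    ∑ t ∈ Icc 2 b, (1 - (1 - x) ^ (t - 1))
      = (b : K) - 1 - x⁻¹ * (1 - x) * (1 - (1 - x) ^ (b - 1)) := by
  induction b, hb using Nat.le_induction with
  | base => simp
  | succ b hb ih =>
    rw [sum_Icc_succ_top (by omega), ih]
    obtain ⟨m, rfl⟩ : ∃ m, b = m + 1 := ⟨b - 1, by omega⟩
    simp only [Nat.add_sub_cancel]
    field_simp
    push_cast
    ring

theorem antivary_one_sub_pow_pred_one_sub_pow_sub {α : Type*} [Ring α] [PartialOrder α]
    [IsOrderedRing α] {q : α} (h0 : 0 ≤ q) (h1 : q ≤ 1) (b : ℕ) :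
    Antivary (fun t : ℕ => 1 - q ^ (t - 1)) (fun t => 1 - q ^ (b - t)) :=
  have hmono : Monotone fun m : ℕ => 1 - q ^ m :=
    fun _ _ h => sub_le_sub_left (pow_right_anti₀ h0 h1 h) 1
  Monotone.antivary (hmono.comp fun _ _ h => Nat.sub_le_sub_right h 1)
    (hmono.comp_antitone fun _ _ h => Nat.sub_le_sub_left h b)

section ChebyshevAverage

variable {ι α : Type*} [Field α] [LinearOrder α] [IsStrictOrderedRing α]
  {s : Finset ι} {w A : ι → α}

theorem AntivaryOn.sum_mul_div_sum_le_sum_div_card (hwA : AntivaryOn w A s)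
    (hW : 0 < ∑ i ∈ s, w i) :
    (∑ i ∈ s, w i * A i) / ∑ i ∈ s, w i ≤ (∑ i ∈ s, A i) / #s := by
  have hs : (0 : α) < #s := by
    obtain ⟨i, hi⟩ := nonempty_of_sum_ne_zero hW.ne'
    exact_mod_cast card_pos.2 ⟨i, hi⟩
  rw [div_le_div_iff₀ hW hs, mul_comm (∑ i ∈ s, A i)]
  linarith [hwA.card_mul_sum_le_sum_mul_sum]

theorem AntivaryOn.sum_div_sum_mul_le_one_div_card_mul_sum (hwA : AntivaryOn w A s)
    (hw : ∀ i ∈ s, 0 ≤ w i) (hA : ∀ i ∈ s, 0 ≤ A i) (hW : 0 < ∑ i ∈ s, w i)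
    {c x y : α} (hc : 0 ≤ c) (hx : 0 < x) (hxy : x ≤ y) :
    ∑ i ∈ s, w i / (∑ j ∈ s, w j) * (c * A i / y + 1)
      ≤ 1 / #s * ∑ i ∈ s, (c * A i / x + 1) := by
  have hs : (#s : α) ≠ 0 := by
    obtain ⟨i, hi⟩ := nonempty_of_sum_ne_zero hW.ne'
    exact_mod_cast (card_pos.2 ⟨i, hi⟩).ne'
  have hposterior : ∑ i ∈ s, w i / (∑ j ∈ s, w j) * (c * A i / y + 1)
      = c / y * ((∑ i ∈ s, w i * A i) / ∑ i ∈ s, w i) + 1 := by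
    calc _ = (∑ i ∈ s, (c / y * (w i * A i) + w i)) / ∑ i ∈ s, w i := by
          rw [sum_div]
          exact sum_congr rfl fun i _ => by ring
      _ = _ := by rw [sum_add_distrib, ← mul_sum, add_div, div_self hW.ne', mul_div_assoc]
  have huniform : 1 / #s * ∑ i ∈ s, (c * A i / x + 1) = c / x * ((∑ i ∈ s, A i) / #s) + 1 := by
    rw [sum_add_distrib, ← sum_div, ← mul_sum, sum_const, nsmul_eq_mul, mul_one]
    field_simp
  rw [hposterior, huniform, add_le_add_iff_right]
  exact mul_le_mul (div_le_div_of_nonneg_left hc hx hxy)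
    (hwA.sum_mul_div_sum_le_sum_div_card hW)
    (div_nonneg (sum_nonneg fun i hi => mul_nonneg (hw i hi) (hA i hi)) hW.le)
    (div_nonneg hc hx.le)

end ChebyshevAverage

/-- Comparison of expected gains: the uniform average over positions of `φ̃_t(γ)` is at
least the `ψ_t(γ)`-weighted average of `φ_t(γ)`:
`(1/(b−1)) Σ_{t=2}^{b} φ̃_t(γ) ≥ Σ_{t=2}^{b} ψ_t(γ) φ_t(γ)` for all `γ ∈ (0,1)`. -/
theorem uniform_average_ge_posterior_average
    (n b : ℕ) (hn : 1 ≤ n) (hb : 3 ≤ b) (γ : ℝ) (hγ : γ ∈ Set.Ioo (0 : ℝ) 1) :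
    (1 / ((b : ℝ) - 1)) *
        ∑ t ∈ Finset.Icc 2 b,
          ((n : ℝ) * (1 - γ) * (1 - (1 - γ ^ n) ^ (b - t)) / γ ^ n + 1)
      ≥ ∑ t ∈ Finset.Icc 2 b,
          ((1 - (1 - γ ^ n) ^ (t - 1)) /
              ((b : ℝ) - 1 - (γ ^ n)⁻¹ * (1 - γ ^ n) * (1 - (1 - γ ^ n) ^ (b - 1)))) *
            ((n : ℝ) * (1 - γ) * (1 - (1 - γ ^ n) ^ (b - t)) / γ + 1) := by
  obtain ⟨hγ0, hγ1⟩ := hγ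
  have hx0 : 0 < γ ^ n := pow_pos hγ0 n
  have hq0 : 0 ≤ 1 - γ ^ n := sub_nonneg.2 (pow_le_one₀ hγ0.le hγ1.le)
  have hq1 : 1 - γ ^ n ≤ 1 := sub_le_self 1 hx0.le
  have hone_sub_pow_nonneg (k : ℕ) : 0 ≤ 1 - (1 - γ ^ n) ^ k :=
    sub_nonneg.2 (pow_le_one₀ hq0 hq1)
  have hcard : ((#(Icc 2 b) : ℕ) : ℝ) = b - 1 := by
    rw [Nat.card_Icc, Nat.cast_sub (by omega)]
    push_cast
    ring
  have hW : 0 < ∑ t ∈ Icc 2 b, (1 - (1 - γ ^ n) ^ (t - 1)) :=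
    sum_pos' (fun t _ => hone_sub_pow_nonneg _)
      ⟨2, mem_Icc.2 ⟨le_rfl, by omega⟩, by simpa using hx0⟩
  have hanti : AntivaryOn (fun t : ℕ => 1 - (1 - γ ^ n) ^ (t - 1))
      (fun t => 1 - (1 - γ ^ n) ^ (b - t)) (Icc 2 b) :=
    (antivary_one_sub_pow_pred_one_sub_pow_sub hq0 hq1 b).antivaryOn _
  rw [← sum_Icc_two_one_sub_pow_pred hx0.ne' (by omega : 1 ≤ b), ← hcard]
  exact hanti.sum_div_sum_mul_le_one_div_card_mul_sum (fun _ _ => hone_sub_pow_nonneg _)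
    (fun _ _ => hone_sub_pow_nonneg _) hW (mul_nonneg n.cast_nonneg (sub_nonneg.2 hγ1.le)) hx0
    (pow_le_of_le_one hγ0.le hγ1.le (by omega))
end

section
/- Fix integers n ≥ 1 and b ≥ 3, and for γ ∈ (0,1) define F(γ) = Σ_{t=2}^{b} ψ_t(γ) φ_t(γ), where φ_t(γ) = n(1−γ)(1−(1−γ^n)^{b−t})/γ + 1 and ψ_t(γ) = (1−(1−γ^n)^{t−1}) / (b−1 − γ^{−n}(1−γ^n)(1−(1−γ^n)^{b−1})). Then F(γ) > 1 for every γ ∈ (0,1). -/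
/-!
Writing `q = 1 - γⁿ`, the denominator of `ψ_t` is the geometric-type sum
`Σ_{t=2}^{b} (1 - q^{t-1})`, so `F(γ)` is the average of the `φ_t` with positive weights
`1 - q^{t-1}`. Every `φ_t` is at least `1`, and `φ_2 > 1` because `b ≥ 3`; hence the average
exceeds `1`.
-/

open Finset

theorem one_lt_sum_div_sum_mul {ι K : Type*} [Field K] [LinearOrder K] [IsStrictOrderedRing K]
    {s : Finset ι} {w f : ι → K} (hw : ∀ i ∈ s, 0 ≤ w i) (hf : ∀ i ∈ s, 1 ≤ f i)
    (h : ∃ i ∈ s, 0 < w i ∧ 1 < f i) :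
    1 < ∑ i ∈ s, w i / (∑ j ∈ s, w j) * f i := by
  obtain ⟨i, hi, hwi, hfi⟩ := h
  have hW : 0 < ∑ j ∈ s, w j := sum_pos' hw ⟨i, hi, hwi⟩
  simp_rw [div_mul_eq_mul_div, ← sum_div]
  rw [one_lt_div hW]
  refine sum_lt_sum (fun j hj ↦ ?_) ⟨i, hi, ?_⟩
  · simpa using mul_le_mul_of_nonneg_left (hf j hj) (hw j hj)
  · simpa using mul_lt_mul_of_pos_left hfi hwi

theorem sum_Icc_two_one_sub_one_sub_pow {K : Type*} [Field K] {p : K} (hp : p ≠ 0) {b : ℕ}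
    (hb : 1 ≤ b) :
    ∑ t ∈ Icc 2 b, (1 - (1 - p) ^ (t - 1)) =
      (b : K) - 1 - p⁻¹ * (1 - p) * (1 - (1 - p) ^ (b - 1)) := by
  obtain ⟨m, rfl⟩ := Nat.exists_eq_add_of_le' hb
  have hgeom :
      ∑ t ∈ Icc 2 (m + 1), (1 - p) ^ (t - 1) = (1 - p) * ∑ k ∈ range m, (1 - p) ^ k := by
    rw [mul_sum, ← Ico_add_one_right_eq_Icc, sum_Ico_eq_sum_range,
      show m + 1 + 1 - 2 = m by omega]
    refine sum_congr rfl fun k _ ↦ ?_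
    rw [show 2 + k - 1 = k + 1 by omega, pow_succ']
  have hratio : ∑ k ∈ range m, (1 - p) ^ k = p⁻¹ * (1 - (1 - p) ^ m) := by
    rw [geom_sum_eq (by simpa using hp), sub_sub_cancel_left, div_neg, ← neg_div, neg_sub,
      div_eq_inv_mul]
  rw [sum_sub_distrib, sum_const, Nat.card_Icc, hgeom, hratio, Nat.add_sub_cancel]
  simp only [nsmul_eq_mul, mul_one, show m + 1 + 1 - 2 = m by omega]
  push_cast
  ring

/-- The posterior-weighted expected gain from contributing after observing a defection,
`F(γ) = Σ_{t=2}^{b} ψ_t(γ) φ_t(γ)`, exceeds `1` for every `γ ∈ (0,1)`. -/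
theorem posterior_expected_gain_gt_one
    (n b : ℕ) (hn : 1 ≤ n) (hb : 3 ≤ b) (γ : ℝ) (hγ : γ ∈ Set.Ioo (0 : ℝ) 1) :
    1 < ∑ t ∈ Finset.Icc 2 b,
        ((1 - (1 - γ ^ n) ^ (t - 1)) /
            ((b : ℝ) - 1 - (γ ^ n)⁻¹ * (1 - γ ^ n) * (1 - (1 - γ ^ n) ^ (b - 1)))) *
          ((n : ℝ) * (1 - γ) * (1 - (1 - γ ^ n) ^ (b - t)) / γ + 1) := by
  obtain ⟨hγ0, hγ1⟩ := hγ
  have hp0 : 0 < γ ^ n := pow_pos hγ0 n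
  have hp1 : γ ^ n < 1 := pow_lt_one₀ hγ0.le hγ1 (by omega)
  have hq_pow_lt {k : ℕ} (hk : k ≠ 0) : (1 - γ ^ n) ^ k < 1 :=
    pow_lt_one₀ (by linarith) (by linarith) hk
  have hgain_nonneg {k : ℕ} : 0 ≤ (n : ℝ) * (1 - γ) * (1 - (1 - γ ^ n) ^ k) / γ := by
    have : (1 - γ ^ n) ^ k ≤ 1 := pow_le_one₀ (by linarith) (by linarith)
    have : 0 ≤ 1 - γ := by linarith
    positivity
  rw [← sum_Icc_two_one_sub_one_sub_pow hp0.ne' (by omega)]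
  refine one_lt_sum_div_sum_mul (fun t ht ↦ ?_)
    (fun t _ ↦ by linarith [hgain_nonneg (k := b - t)]) ⟨2, ?_⟩
  · linarith [hq_pow_lt (k := t - 1) (by grind)]
  · have hgain_pos : 0 < (n : ℝ) * (1 - γ) * (1 - (1 - γ ^ n) ^ (b - 2)) / γ := by
      have : 0 < (n : ℝ) := by exact_mod_cast hn
      have : 0 < 1 - γ := by linarith
      have : 0 < 1 - (1 - γ ^ n) ^ (b - 2) := by linarith [hq_pow_lt (k := b - 2) (by omega)]
      positivity
    exact ⟨mem_Icc.mpr ⟨le_rfl, by omega⟩, by simpa using hp0, by linarith⟩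
end

section
/- Fix integers n ≥ 2 and b ≥ 3, and for γ ∈ (0,1) define F(γ) = Σ_{t=2}^{b} ψ_t(γ) φ_t(γ), where φ_t(γ) = n(1−γ)(1−(1−γ^n)^{b−t})/γ + 1 and ψ_t(γ) = (1−(1−γ^n)^{t−1}) / (b−1 − γ^{−n}(1−γ^n)(1−(1−γ^n)^{b−1})). Then F(γ) → 1 as γ → 0⁺. -/
/-!
Put `x = γ ^ n` and `S k x = ∑_{i<k} (1 - x) ^ i` (`oneSubGeomSum`), so that
`1 - (1 - x) ^ k = x * S k x`. Then the denominator of `ψ_t` is `x * ∑_{s=2}^{b} S (s - 1) x`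
(`posteriorNormalizer`), the factor `x` cancels, and `ψ_t = S (t - 1) x / ∑_{s=2}^{b} S (s - 1) x`
is continuous at `γ = 0` and sums to `1` over `t`.
Likewise `φ_t = n (1 - γ) γ ^ (n - 1) S (b - t) x + 1`, which tends to `1` because `n ≥ 2`.
-/

open Filter Set Finset Topology

section Algebra

variable {R : Type*} [Ring R]

def oneSubGeomSum (k : ℕ) (x : R) : R := ∑ i ∈ range k, (1 - x) ^ i

def posteriorNormalizer (b : ℕ) (x : R) : R := ∑ t ∈ Icc 2 b, oneSubGeomSum (t - 1) x

theorem one_sub_one_sub_pow (x : R) (k : ℕ) : 1 - (1 - x) ^ k = x * oneSubGeomSum k x := by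
  rw [oneSubGeomSum, ← mul_neg_geom_sum, sub_sub_cancel]

theorem natCast_sub_mul_oneSubGeomSum (x : R) (m : ℕ) :
    (m : R) - (1 - x) * oneSubGeomSum m x = x * ∑ i ∈ range m, oneSubGeomSum (i + 1) x := by
  simp_rw [mul_sum, ← one_sub_one_sub_pow, sum_sub_distrib, oneSubGeomSum, mul_sum, ← pow_succ']
  simp

theorem sum_Icc_two_sub_one {M : Type*} [AddCommMonoid M] (f : ℕ → M) (b : ℕ) :
    ∑ t ∈ Icc 2 b, f (t - 1) = ∑ i ∈ range (b - 1), f (i + 1) := by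
  rw [← Finset.Ico_add_one_right_eq_Icc, sum_Ico_eq_sum_range]
  exact sum_congr rfl fun i _ => by congr 1; omega

theorem natCast_sub_one_sub_mul_oneSubGeomSum (x : R) {b : ℕ} (hb : 1 ≤ b) :
    (b : R) - 1 - (1 - x) * oneSubGeomSum (b - 1) x = x * posteriorNormalizer b x := by
  rw [posteriorNormalizer, sum_Icc_two_sub_one (oneSubGeomSum · x),
    ← natCast_sub_mul_oneSubGeomSum, Nat.cast_sub hb, Nat.cast_one]

theorem oneSubGeomSum_zero_right (k : ℕ) : oneSubGeomSum k (0 : R) = k := by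
  simp [oneSubGeomSum]

theorem posteriorNormalizer_zero_pos [PartialOrder R] [IsStrictOrderedRing R] {b : ℕ}
    (hb : 2 ≤ b) : 0 < posteriorNormalizer b (0 : R) := by
  refine sum_pos (fun t ht => ?_) ⟨2, by simpa using hb⟩
  have := (Finset.mem_Icc.1 ht).1
  rw [oneSubGeomSum_zero_right, Nat.cast_pos]
  omega

end Algebra

section Topology

variable {R : Type*} [Ring R] [TopologicalSpace R] [IsTopologicalRing R]

@[fun_prop]
theorem continuous_oneSubGeomSum (k : ℕ) : Continuous (oneSubGeomSum k : R → R) := by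
  unfold oneSubGeomSum
  fun_prop

@[fun_prop]
theorem continuous_posteriorNormalizer (b : ℕ) : Continuous (posteriorNormalizer b : R → R) := by
  unfold posteriorNormalizer
  fun_prop

end Topology

section Field

variable {K : Type*} [Field K]

theorem one_sub_one_sub_pow_div_eq_div_posteriorNormalizer {x : K} (hx : x ≠ 0) {b : ℕ}
    (hb : 1 ≤ b) (k : ℕ) :
    (1 - (1 - x) ^ k) / ((b : K) - 1 - x⁻¹ * (1 - x) * (1 - (1 - x) ^ (b - 1))) =
      oneSubGeomSum k x / posteriorNormalizer b x := by
  have hcancel : x⁻¹ * (1 - x) * (x * oneSubGeomSum (b - 1) x) =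
      (1 - x) * oneSubGeomSum (b - 1) x := by
    field_simp
  rw [one_sub_one_sub_pow, one_sub_one_sub_pow, hcancel,
    natCast_sub_one_sub_mul_oneSubGeomSum x hb, mul_div_mul_left _ _ hx]

theorem one_sub_one_sub_pow_pow_div_self {γ : K} (hγ : γ ≠ 0) {n : ℕ} (hn : 1 ≤ n) (m : ℕ) :
    (1 - (1 - γ ^ n) ^ m) / γ = γ ^ (n - 1) * oneSubGeomSum m (γ ^ n) := by
  obtain ⟨k, rfl⟩ := Nat.exists_eq_add_of_le' hn
  rw [one_sub_one_sub_pow, pow_succ, Nat.add_sub_cancel]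
  field_simp

end Field

theorem tendsto_sum_mul_div_posteriorNormalizer {n b : ℕ} (hn : 2 ≤ n) (hb : 2 ≤ b) :
    Tendsto (fun γ : ℝ => (∑ t ∈ Icc 2 b, oneSubGeomSum (t - 1) (γ ^ n) *
        ((n : ℝ) * (1 - γ) * γ ^ (n - 1) * oneSubGeomSum (b - t) (γ ^ n) + 1)) /
        posteriorNormalizer b (γ ^ n)) (𝓝 0) (𝓝 1) := by
  have hD : posteriorNormalizer b ((0 : ℝ) ^ n) ≠ 0 := by
    rw [zero_pow (by omega)]
    exact (posteriorNormalizer_zero_pos hb).ne'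
  have tendsto_of_continuousAt : ∀ {f : ℝ → ℝ}, ContinuousAt f 0 → f 0 = 1 →
      Tendsto f (𝓝 0) (𝓝 1) :=
    fun hf h => h ▸ hf.tendsto
  refine tendsto_of_continuousAt (by fun_prop (disch := exact hD)) ?_
  -- at `γ = 0` every `φ_t` is `1`, and the numerator is then the normalizer itself
  simp only [zero_pow (by omega : n - 1 ≠ 0), mul_zero, zero_mul, zero_add, mul_one]
  exact div_self hD

/-- For group size `n ≥ 2`, the posterior-weighted expected gain from contributing after a
defection, `F(γ) = Σ_{t=2}^{b} ψ_t(γ) φ_t(γ)`, tends to `1` as `γ → 0⁺`. -/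
theorem posterior_expected_gain_limit_at_zero
    (n b : ℕ) (hn : 2 ≤ n) (hb : 3 ≤ b) :
    Tendsto (fun γ : ℝ =>
        ∑ t ∈ Finset.Icc 2 b,
          ((1 - (1 - γ ^ n) ^ (t - 1)) /
              ((b : ℝ) - 1 - (γ ^ n)⁻¹ * (1 - γ ^ n) * (1 - (1 - γ ^ n) ^ (b - 1)))) *
            ((n : ℝ) * (1 - γ) * (1 - (1 - γ ^ n) ^ (b - t)) / γ + 1))
      (nhdsWithin 0 (Ioi 0)) (nhds 1) := by
  refine ((tendsto_sum_mul_div_posteriorNormalizer hn (show 2 ≤ b by omega)).mono_left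
    nhdsWithin_le_nhds).congr' ?_
  filter_upwards [self_mem_nhdsWithin] with γ (hγ : 0 < γ)
  rw [sum_div]
  refine sum_congr rfl fun t _ => ?_
  rw [one_sub_one_sub_pow_div_eq_div_posteriorNormalizer (pow_ne_zero n hγ.ne') (by omega),
    mul_div_assoc (_ * _), one_sub_one_sub_pow_pow_div_self hγ.ne' (by omega)]
  ring
end

section
/- Fix integers n ≥ 2 and b ≥ 3 and set N = bn. For γ ∈ (0,1) define F(γ) = Σ_{t=2}^{b} ψ_t(γ) φ_t(γ), where φ_t(γ) = n(1−γ)(1−(1−γ^n)^{b−t})/γ + 1 and ψ_t(γ) = (1−(1−γ^n)^{t−1}) / (b−1 − γ^{−n}(1−γ^n)(1−(1−γ^n)^{b−1})). Then there exists r^♯ ∈ (0, N) such that: (i) there exists γ^♯ ∈ (0,1) with (r^♯/N)·F(γ^♯) = 1; and (ii) for every r with r^♯ < r < N there exist γ_1, γ_2 ∈ (0,1) with γ_1 ≠ γ_2 such that (r/N)·F(γ_1) = 1 and (r/N)·F(γ_2) = 1. -/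
/-!
`F` is the average of the gains `φ_t` against the positive weights `1 - (1 - γⁿ)^(t-1)`, whose
total is the denominator of `ψ_t` (a geometric sum). Every `φ_t` is at least `1` and `φ_2 > 1`
because `b ≥ 3`, so `F > 1` on `(0,1)`; on the other hand `φ_t - 1 ≤ nbγ` (Bernoulli, using `n ≥ 2`)
and `φ_t - 1 ≤ n(1-γ)/γ`, so `F → 1` at both ends of `(0,1)`. Taking `r^♯ = N / F(1/2)`, every
`r ∈ (r^♯, N)` gives a level `N/r` strictly between `1` and `F(1/2)`, which `F` attains by the
intermediate value theorem once on each side of `1/2`.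
-/

open Finset Filter Topology

theorem sum_Icc_two_pow_sub_one_mul {R : Type*} [CommRing R] (y : R) (b : ℕ) :
    (∑ t ∈ Icc 2 b, y ^ (t - 1)) * (1 - y) = y * (1 - y ^ (b - 1)) := by
  induction b with
  | zero => simp
  | succ b ih =>
    rcases Nat.eq_zero_or_pos b with rfl | hb
    · simp
    · rw [sum_Icc_succ_top (by omega), add_mul, ih]
      obtain ⟨k, rfl⟩ : ∃ k, b = k + 1 := ⟨b - 1, by omega⟩
      simp only [Nat.add_sub_cancel]
      ring

theorem sum_Icc_two_one_sub_pow {K : Type*} [Field K] {x : K} (hx : x ≠ 0) {b : ℕ}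
    (hb : 1 ≤ b) :
    ∑ t ∈ Icc 2 b, (1 - (1 - x) ^ (t - 1)) = b - 1 - x⁻¹ * (1 - x) * (1 - (1 - x) ^ (b - 1)) := by
  have hsum : ∑ t ∈ Icc 2 b, (1 - x) ^ (t - 1) = x⁻¹ * (1 - x) * (1 - (1 - x) ^ (b - 1)) := by
    rw [mul_assoc, ← sum_Icc_two_pow_sub_one_mul, sub_sub_cancel, mul_comm _ x,
      inv_mul_cancel_left₀ hx]
  have hcard : ((b + 1 - 2 : ℕ) : K) = b - 1 := by
    rw [show b + 1 - 2 = b - 1 by omega, Nat.cast_sub hb, Nat.cast_one]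
  rw [sum_sub_distrib, sum_const, Nat.card_Icc, nsmul_eq_mul, mul_one, hcard, hsum]

section WeightedAverage

variable {ι : Type*} {s : Finset ι} {w f : ι → ℝ} {c : ℝ}

theorem sum_mul_div_sum_le (hw : ∀ i ∈ s, 0 ≤ w i) (hs : 0 < ∑ i ∈ s, w i)
    (hf : ∀ i ∈ s, f i ≤ c) : (∑ i ∈ s, w i * f i) / ∑ i ∈ s, w i ≤ c := by
  rw [div_le_iff₀ hs, mul_sum]
  exact sum_le_sum fun i hi => by
    rw [mul_comm c]; exact mul_le_mul_of_nonneg_left (hf i hi) (hw i hi)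

theorem le_sum_mul_div_sum (hw : ∀ i ∈ s, 0 ≤ w i) (hs : 0 < ∑ i ∈ s, w i)
    (hf : ∀ i ∈ s, c ≤ f i) : c ≤ (∑ i ∈ s, w i * f i) / ∑ i ∈ s, w i := by
  rw [le_div_iff₀ hs, mul_sum]
  exact sum_le_sum fun i hi => by
    rw [mul_comm c]; exact mul_le_mul_of_nonneg_left (hf i hi) (hw i hi)

theorem lt_sum_mul_div_sum (hw : ∀ i ∈ s, 0 < w i) (hf : ∀ i ∈ s, c ≤ f i)
    (hlt : ∃ i ∈ s, c < f i) : c < (∑ i ∈ s, w i * f i) / ∑ i ∈ s, w i := by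
  obtain ⟨j, hj, hcj⟩ := hlt
  rw [lt_div_iff₀ (sum_pos hw ⟨j, hj⟩), mul_sum]
  exact sum_lt_sum
    (fun i hi => by rw [mul_comm c]; exact mul_le_mul_of_nonneg_left (hf i hi) (hw i hi).le)
    ⟨j, hj, by rw [mul_comm c]; exact mul_lt_mul_of_pos_left hcj (hw j hj)⟩

end WeightedAverage

theorem exists_ne_eq_of_le_of_lt {f : ℝ → ℝ} {a m c v : ℝ} (hf : ContinuousOn f (Set.Icc a c))
    (ham : a ≤ m) (hmc : m ≤ c) (ha : f a ≤ v) (hc : f c ≤ v) (hm : v < f m) :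
    ∃ x₁ ∈ Set.Icc a c, ∃ x₂ ∈ Set.Icc a c, x₁ ≠ x₂ ∧ f x₁ = v ∧ f x₂ = v := by
  obtain ⟨x₁, ⟨hax₁, hx₁m⟩, hfx₁⟩ :=
    intermediate_value_Icc ham (hf.mono (Set.Icc_subset_Icc_right hmc)) ⟨ha, hm.le⟩
  obtain ⟨x₂, ⟨hmx₂, hx₂c⟩, hfx₂⟩ :=
    intermediate_value_Icc' hmc (hf.mono (Set.Icc_subset_Icc_left ham)) ⟨hc, hm.le⟩
  have hx₁m' : x₁ < m := lt_of_le_of_ne hx₁m (by rintro rfl; exact hm.ne' hfx₁)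
  exact ⟨x₁, ⟨hax₁, hx₁m.trans hmc⟩, x₂, ⟨ham.trans hmx₂, hx₂c⟩,
    (hx₁m'.trans_le hmx₂).ne, hfx₁, hfx₂⟩

/-- `ψ_t(γ) = positionWeight n γ t / ∑_{s=2}^{b} positionWeight n γ s`. -/
noncomputable def positionWeight (n : ℕ) (γ : ℝ) (t : ℕ) : ℝ :=
  1 - (1 - γ ^ n) ^ (t - 1)

/-- `φ_t(γ)`. -/
noncomputable def contributionGain (n b : ℕ) (γ : ℝ) (t : ℕ) : ℝ :=
  n * (1 - γ) * (1 - (1 - γ ^ n) ^ (b - t)) / γ + 1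

/-- `F(γ)`, spelled exactly as in the theorem so that the theorem's sums unfold to it. -/
noncomputable def expectedGain (n b : ℕ) (γ : ℝ) : ℝ :=
  ∑ t ∈ Icc 2 b,
    ((1 - (1 - γ ^ n) ^ (t - 1)) /
        ((b : ℝ) - 1 - (γ ^ n)⁻¹ * (1 - γ ^ n) * (1 - (1 - γ ^ n) ^ (b - 1)))) *
      ((n : ℝ) * (1 - γ) * (1 - (1 - γ ^ n) ^ (b - t)) / γ + 1)

section Gain

variable {n b : ℕ} {γ : ℝ}

theorem expectedGain_eq (hγ : γ ≠ 0) (hb : 1 ≤ b) :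
    expectedGain n b γ = (∑ t ∈ Icc 2 b, positionWeight n γ t * contributionGain n b γ t) /
      ∑ t ∈ Icc 2 b, positionWeight n γ t := by
  simp only [expectedGain, positionWeight, contributionGain]
  rw [sum_Icc_two_one_sub_pow (pow_ne_zero n hγ) hb, sum_div]
  exact sum_congr rfl fun _ _ => div_mul_eq_mul_div _ _ _

theorem pow_mem_Ioo (hγ : γ ∈ Set.Ioo 0 1) (hn : n ≠ 0) : γ ^ n ∈ Set.Ioo 0 1 :=
  ⟨pow_pos hγ.1 n, pow_lt_one₀ hγ.1.le hγ.2 hn⟩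

theorem positionWeight_pos (hγ : γ ∈ Set.Ioo 0 1) (hn : n ≠ 0) {t : ℕ} (ht : 2 ≤ t) :
    0 < positionWeight n γ t := by
  have hx := pow_mem_Ioo hγ hn
  exact sub_pos.2 (pow_lt_one₀ (by linarith [hx.2]) (by linarith [hx.1]) (by omega))

theorem sum_positionWeight_pos (hγ : γ ∈ Set.Ioo 0 1) (hn : n ≠ 0) (hb : 2 ≤ b) :
    0 < ∑ t ∈ Icc 2 b, positionWeight n γ t :=
  sum_pos (fun _ ht => positionWeight_pos hγ hn (mem_Icc.1 ht).1) (nonempty_Icc.2 hb)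

theorem contributionGain_eq_one_add (t : ℕ) :
    contributionGain n b γ t = 1 + n * (1 - γ) / γ * (1 - (1 - γ ^ n) ^ (b - t)) := by
  rw [contributionGain]
  ring

theorem one_sub_one_sub_pow_mem_Icc (hγ : γ ∈ Set.Ioo 0 1) (k : ℕ) :
    1 - (1 - γ ^ n) ^ k ∈ Set.Icc 0 1 := by
  have hx : γ ^ n ≤ 1 := pow_le_one₀ hγ.1.le hγ.2.le
  have hx₀ : 0 ≤ 1 - γ ^ n := sub_nonneg.2 hx
  exact ⟨sub_nonneg.2 (pow_le_one₀ hx₀ (by linarith [pow_pos hγ.1 n])),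
    sub_le_self _ (pow_nonneg hx₀ k)⟩

theorem natCast_mul_one_sub_div_nonneg (hγ : γ ∈ Set.Ioo 0 1) : 0 ≤ n * (1 - γ) / γ :=
  div_nonneg (mul_nonneg n.cast_nonneg (sub_nonneg.2 hγ.2.le)) hγ.1.le

theorem one_le_contributionGain (hγ : γ ∈ Set.Ioo 0 1) (t : ℕ) :
    1 ≤ contributionGain n b γ t := by
  rw [contributionGain_eq_one_add]
  exact le_add_of_nonneg_right
    (mul_nonneg (natCast_mul_one_sub_div_nonneg hγ) (one_sub_one_sub_pow_mem_Icc hγ _).1)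

theorem one_lt_contributionGain (hγ : γ ∈ Set.Ioo 0 1) (hn : n ≠ 0) {t : ℕ} (ht : t < b) :
    1 < contributionGain n b γ t := by
  have hx := pow_mem_Ioo hγ hn
  have hA : 0 < 1 - (1 - γ ^ n) ^ (b - t) :=
    sub_pos.2 (pow_lt_one₀ (by linarith [hx.2]) (by linarith [hx.1]) (by omega))
  have hc : 0 < n * (1 - γ) / γ :=
    div_pos (mul_pos (by positivity) (sub_pos.2 hγ.2)) hγ.1
  rw [contributionGain_eq_one_add]
  exact lt_add_of_pos_right _ (mul_pos hc hA)

theorem contributionGain_le_one_add_div (hγ : γ ∈ Set.Ioo 0 1) (t : ℕ) :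
    contributionGain n b γ t ≤ 1 + n * (1 - γ) / γ := by
  rw [contributionGain_eq_one_add]
  exact (add_le_add_iff_left 1).2 <|
    mul_le_of_le_one_right (natCast_mul_one_sub_div_nonneg hγ) (one_sub_one_sub_pow_mem_Icc hγ _).2

theorem contributionGain_le_one_add_mul_self (hγ : γ ∈ Set.Ioo 0 1) (hn : 2 ≤ n) (t : ℕ) :
    contributionGain n b γ t ≤ 1 + n * b * γ := by
  have hbernoulli : 1 - (1 - γ ^ n) ^ (b - t) ≤ b * γ ^ 2 :=
    calc 1 - (1 - γ ^ n) ^ (b - t) ≤ (b - t : ℕ) * γ ^ n := by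
          linarith [one_add_mul_sub_le_pow (a := 1 - γ ^ n)
            (by linarith [pow_le_one₀ (n := n) hγ.1.le hγ.2.le]) (b - t)]
      _ ≤ b * γ ^ 2 := mul_le_mul (Nat.cast_le.2 (Nat.sub_le b t))
          (pow_le_pow_of_le_one hγ.1.le hγ.2.le hn) (pow_nonneg hγ.1.le n) b.cast_nonneg
  have hgain : n * (1 - γ) / γ * (1 - (1 - γ ^ n) ^ (b - t)) ≤ n * b * γ :=
    calc n * (1 - γ) / γ * (1 - (1 - γ ^ n) ^ (b - t)) ≤ n * 1 / γ * (b * γ ^ 2) := by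
          gcongr
          exacts [(one_sub_one_sub_pow_mem_Icc hγ _).1, div_nonneg (by positivity) hγ.1.le,
            hγ.1.le, sub_le_self _ hγ.1.le]
      _ = n * b * γ := by field_simp [hγ.1.ne']
  rw [contributionGain_eq_one_add]
  exact (add_le_add_iff_left 1).2 hgain

theorem one_le_expectedGain (hγ : γ ∈ Set.Ioo 0 1) (hn : n ≠ 0) (hb : 2 ≤ b) :
    1 ≤ expectedGain n b γ := by
  rw [expectedGain_eq hγ.1.ne' (by omega)]
  exact le_sum_mul_div_sum (fun t ht => (positionWeight_pos hγ hn (mem_Icc.1 ht).1).le)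
    (sum_positionWeight_pos hγ hn hb) fun t _ => one_le_contributionGain hγ t

theorem one_lt_expectedGain (hγ : γ ∈ Set.Ioo 0 1) (hn : n ≠ 0) (hb : 3 ≤ b) :
    1 < expectedGain n b γ := by
  rw [expectedGain_eq hγ.1.ne' (by omega)]
  exact lt_sum_mul_div_sum (fun t ht => positionWeight_pos hγ hn (mem_Icc.1 ht).1)
    (fun t _ => one_le_contributionGain hγ t)
    ⟨2, mem_Icc.2 ⟨le_rfl, by omega⟩, one_lt_contributionGain hγ hn (by omega)⟩

theorem expectedGain_le (hγ : γ ∈ Set.Ioo 0 1) (hn : n ≠ 0) (hb : 2 ≤ b) {c : ℝ}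
    (hc : ∀ t, contributionGain n b γ t ≤ c) : expectedGain n b γ ≤ c := by
  rw [expectedGain_eq hγ.1.ne' (by omega)]
  exact sum_mul_div_sum_le (fun t ht => (positionWeight_pos hγ hn (mem_Icc.1 ht).1).le)
    (sum_positionWeight_pos hγ hn hb) fun t _ => hc t

theorem continuousOn_expectedGain (hn : n ≠ 0) (hb : 2 ≤ b) :
    ContinuousOn (expectedGain n b) (Set.Ioo 0 1) := by
  have hnum : ContinuousOn
      (fun γ => ∑ t ∈ Icc 2 b, positionWeight n γ t * contributionGain n b γ t) (Set.Ioo 0 1) := by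
    refine continuousOn_of_forall_continuousAt fun γ hγ => ?_
    have := hγ.1.ne'
    simp only [positionWeight, contributionGain]
    fun_prop (disch := assumption)
  have hden : Continuous fun γ => ∑ t ∈ Icc 2 b, positionWeight n γ t := by
    simp only [positionWeight]
    fun_prop
  exact (hnum.div hden.continuousOn fun γ hγ => (sum_positionWeight_pos hγ hn hb).ne').congr
    fun γ hγ => expectedGain_eq hγ.1.ne' (by omega)

theorem tendsto_expectedGain_nhdsGT_zero (hn : 2 ≤ n) (hb : 2 ≤ b) :
    Tendsto (expectedGain n b) (𝓝[>] 0) (𝓝 1) := by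
  have hbound : Tendsto (fun γ : ℝ => 1 + n * b * γ) (𝓝[>] 0) (𝓝 1) := by
    have : Continuous fun γ : ℝ => 1 + n * b * γ := by fun_prop
    simpa using (this.tendsto 0).mono_left nhdsWithin_le_nhds
  have hmem : ∀ᶠ γ in 𝓝[>] (0 : ℝ), γ ∈ Set.Ioo 0 1 := Ioo_mem_nhdsGT one_pos
  refine tendsto_of_tendsto_of_tendsto_of_le_of_le' tendsto_const_nhds hbound ?_ ?_
  · filter_upwards [hmem] with γ hγ using one_le_expectedGain hγ (by omega) hb
  · filter_upwards [hmem] with γ hγ using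
      expectedGain_le hγ (by omega) hb (contributionGain_le_one_add_mul_self hγ hn)

theorem tendsto_expectedGain_nhdsLT_one (hn : n ≠ 0) (hb : 2 ≤ b) :
    Tendsto (expectedGain n b) (𝓝[<] 1) (𝓝 1) := by
  have hbound : Tendsto (fun γ : ℝ => 1 + n * (1 - γ) / γ) (𝓝[<] 1) (𝓝 1) := by
    have : ContinuousAt (fun γ : ℝ => 1 + n * (1 - γ) / γ) 1 := by fun_prop (disch := norm_num)
    simpa using this.tendsto.mono_left nhdsWithin_le_nhds
  have hmem : ∀ᶠ γ in 𝓝[<] (1 : ℝ), γ ∈ Set.Ioo 0 1 := Ioo_mem_nhdsLT one_pos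
  refine tendsto_of_tendsto_of_tendsto_of_le_of_le' tendsto_const_nhds hbound ?_ ?_
  · filter_upwards [hmem] with γ hγ using one_le_expectedGain hγ hn hb
  · filter_upwards [hmem] with γ hγ using
      expectedGain_le hγ hn hb (contributionGain_le_one_add_div hγ)

theorem exists_ne_expectedGain_eq (hn : 2 ≤ n) (hb : 2 ≤ b) {v : ℝ} (hv : 1 < v)
    (hv' : v < expectedGain n b (1 / 2)) :
    ∃ γ₁ ∈ Set.Ioo 0 1, ∃ γ₂ ∈ Set.Ioo 0 1, γ₁ ≠ γ₂ ∧
      expectedGain n b γ₁ = v ∧ expectedGain n b γ₂ = v := by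
  obtain ⟨a, haF, ha⟩ := (((tendsto_expectedGain_nhdsGT_zero hn hb).eventually (gt_mem_nhds hv)).and
    (Ioo_mem_nhdsGT (by norm_num : (0 : ℝ) < 1 / 2))).exists
  obtain ⟨c, hcF, hc⟩ := (((tendsto_expectedGain_nhdsLT_one (n := n) (by omega) hb).eventually
    (gt_mem_nhds hv)).and (Ioo_mem_nhdsLT (by norm_num : (1 / 2 : ℝ) < 1))).exists
  have hsub : Set.Icc a c ⊆ Set.Ioo 0 1 := fun x hx => ⟨ha.1.trans_le hx.1, hx.2.trans_lt hc.2⟩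
  obtain ⟨γ₁, h₁, γ₂, h₂, hne, hF₁, hF₂⟩ :=
    exists_ne_eq_of_le_of_lt ((continuousOn_expectedGain (n := n) (by omega) hb).mono hsub)
      ha.2.le hc.1.le haF.le hcF.le hv'
  exact ⟨γ₁, hsub h₁, γ₂, hsub h₂, hne, hF₁, hF₂⟩

end Gain

/-- Analytic core of the mixed-strategy theorem: with `N = bn` and
`F(γ) = Σ_{t=2}^{b} ψ_t(γ) φ_t(γ)`, there is a threshold return `r^♯ ∈ (0, N)` such that
(i) for some `γ^♯ ∈ (0,1)` the indifference condition `(r^♯/N)·F(γ^♯) = 1` holds, and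
(ii) for every `r` with `r^♯ < r < N` there are two distinct `γ₁, γ₂ ∈ (0,1)` with
`(r/N)·F(γ₁) = 1` and `(r/N)·F(γ₂) = 1`. -/
theorem mixed_strategy_indifference_thresholds
    (n b : ℕ) (hn : 2 ≤ n) (hb : 3 ≤ b) :
    ∃ rs : ℝ, rs ∈ Set.Ioo (0 : ℝ) ((b : ℝ) * n) ∧
      (∃ γs ∈ Set.Ioo (0 : ℝ) 1,
        (rs / ((b : ℝ) * n)) *
          (∑ t ∈ Finset.Icc 2 b,
            ((1 - (1 - γs ^ n) ^ (t - 1)) /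
                ((b : ℝ) - 1 - (γs ^ n)⁻¹ * (1 - γs ^ n) * (1 - (1 - γs ^ n) ^ (b - 1)))) *
              ((n : ℝ) * (1 - γs) * (1 - (1 - γs ^ n) ^ (b - t)) / γs + 1)) = 1) ∧
      (∀ r : ℝ, rs < r → r < (b : ℝ) * n →
        ∃ γ₁ ∈ Set.Ioo (0 : ℝ) 1, ∃ γ₂ ∈ Set.Ioo (0 : ℝ) 1, γ₁ ≠ γ₂ ∧
          (r / ((b : ℝ) * n)) *
            (∑ t ∈ Finset.Icc 2 b,
              ((1 - (1 - γ₁ ^ n) ^ (t - 1)) /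
                  ((b : ℝ) - 1 - (γ₁ ^ n)⁻¹ * (1 - γ₁ ^ n) * (1 - (1 - γ₁ ^ n) ^ (b - 1)))) *
                ((n : ℝ) * (1 - γ₁) * (1 - (1 - γ₁ ^ n) ^ (b - t)) / γ₁ + 1)) = 1 ∧
          (r / ((b : ℝ) * n)) *
            (∑ t ∈ Finset.Icc 2 b,
              ((1 - (1 - γ₂ ^ n) ^ (t - 1)) /
                  ((b : ℝ) - 1 - (γ₂ ^ n)⁻¹ * (1 - γ₂ ^ n) * (1 - (1 - γ₂ ^ n) ^ (b - 1)))) *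
                ((n : ℝ) * (1 - γ₂) * (1 - (1 - γ₂ ^ n) ^ (b - t)) / γ₂ + 1)) = 1) := by
  have hN : (0 : ℝ) < b * n := by positivity
  have hF : 1 < expectedGain n b (1 / 2) := one_lt_expectedGain (by norm_num) (by omega) hb
  refine ⟨b * n / expectedGain n b (1 / 2),
    ⟨div_pos hN (one_pos.trans hF), div_lt_self hN hF⟩, ⟨1 / 2, by norm_num, ?_⟩, ?_⟩
  · change _ * expectedGain n b (1 / 2) = 1
    field_simp
  · intro r hr hrN
    have hr₀ : 0 < r := (div_pos hN (one_pos.trans hF)).trans hr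
    have hsolve : ∀ γ, expectedGain n b γ = b * n / r → r / (b * n) * expectedGain n b γ = 1 :=
      fun γ hγ => by rw [hγ]; field_simp
    obtain ⟨γ₁, h₁, γ₂, h₂, hne, hF₁, hF₂⟩ := exists_ne_expectedGain_eq hn (by omega)
      ((one_lt_div hr₀).2 hrN) ((div_lt_iff₀ hr₀).2 ((div_lt_iff₀' (one_pos.trans hF)).1 hr))
    exact ⟨γ₁, h₁, γ₂, h₂, hne, hsolve γ₁ hF₁, hsolve γ₂ hF₂⟩
end
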